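/- arXiv:2301.00471 — 3 statements merged into one kernel-verified Lean document; each statement's English description precedes it below -/
import Mathlib

section
/- Let k ∈ ℕ*, T > 0, B̃ ∈ M_d(ℂ), M̃ ∈ M_{d,m}(ℂ), and X₀ ∈ ℂ^d. Let w : [0,T] → ℂ^{mk} be of class C^{k−1} with w^{(j)}(0) = w^{(j)}(T) = 0 for all 0 ≤ j ≤ k−2. Write w = (w₁, …, w_k) with each w_j valued in ℂ^m, and set u := w₁ + w₂' + … + w_k^{(k−1)}. Let X, X̃ : [0,T] → ℂ^d be the solutions of X' = B̃X + [B̃|M̃]_k·w and X̃' = B̃X̃ + M̃·u with X(0) = X̃(0) = X₀, where [B̃|M̃]_k := (M̃, B̃M̃, …, B̃^{k−1}M̃) ∈ M_{d,km}(ℂ). Then X(T) = X̃(T). -/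
open MeasureTheory Real Set Matrix

noncomputable section

instance : Fact (0 < 2 * Real.pi) := ⟨by positivity⟩

/-- The one-dimensional torus `ℝ/(2πℤ)`. -/
abbrev Torus : Type := AddCircle (2 * Real.pi)

/-- The `n`-th Fourier coefficient of a vector-valued function on the torus. -/
def fCoeff {ι : Type*} (f : Torus → ι → ℂ) (n : ℤ) : ι → ℂ :=
  fun i => fourierCoeff (fun x => f x i) n

/-- The `n`-th Fourier coefficient of a real vector-valued function on the torus. -/
def fCoeffR {ι : Type*} (f : Torus → ι → ℝ) (n : ℤ) : ι → ℂ :=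
  fCoeff (fun x i => (f x i : ℂ)) n

/-- Membership in the Sobolev space `H^s` (square-summability of Fourier coefficients
with weight `(1+n²)^s`). -/
def memHs {ι : Type*} [Fintype ι] (s : ℝ) (f : Torus → ι → ℝ) : Prop :=
  Summable fun n : ℤ => (1 + (n : ℝ) ^ 2) ^ s * ∑ i, ‖fCoeffR f n i‖ ^ 2

/-- The matrix `B_n := -n² B - i n A - K`. -/
def BnMat {ι : Type*} [Fintype ι] [DecidableEq ι] (B A K : Matrix ι ι ℝ) (n : ℤ) :
    Matrix ι ι ℂ :=
  (-(n : ℂ) ^ 2) • B.map Complex.ofReal - (Complex.I * (n : ℂ)) • A.map Complex.ofReal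
    - K.map Complex.ofReal

/-- The `k`-block Kalman matrix `(M, BM, …, B^{k-1}M)`. -/
def kalman {ι : Type*} [Fintype ι] [DecidableEq ι] {m : ℕ} (B : Matrix ι ι ℂ)
    (M : Matrix ι (Fin m) ℂ) (k : ℕ) : Matrix ι (Fin k × Fin m) ℂ :=
  Matrix.of fun i p => (B ^ (p.1 : ℕ) * M) i p.2

/-- `ℓ(ω)`: supremum of the lengths of the connected components of the complement of `ω`. -/
def ellOmega (ω : Set Torus) : ℝ :=
  sSup {L : ℝ | ∃ x ∈ ωᶜ, L = (volume (connectedComponentIn ωᶜ x)).toReal}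

/-- `μ* := min { |μ| : μ ∈ Sp(A') }`. -/
def muStar {dh : ℕ} (A' : Matrix (Fin dh) (Fin dh) ℝ) : ℝ :=
  sInf ((‖·‖) '' spectrum ℂ (A'.map Complex.ofReal))

/-- `A'` is diagonalizable over `ℂ` with only real eigenvalues. -/
def IsDiagRealSpec {dh : ℕ} (A' : Matrix (Fin dh) (Fin dh) ℝ) : Prop :=
  ∃ (P : Matrix (Fin dh) (Fin dh) ℂ) (μ : Fin dh → ℝ),
    IsUnit P.det ∧ A'.map Complex.ofReal = P * Matrix.diagonal (fun i => (μ i : ℂ)) * P⁻¹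

/-- The control `u ∈ L²((0,T)×𝕋; ℝ^m)`, vanishing a.e. outside `ω`, steers the initial datum
`f₀` to `0` in time `T`, expressed frequency-by-frequency through Duhamel's formula. -/
def steers {ι : Type*} [Fintype ι] [DecidableEq ι] {m : ℕ}
    (B A K : Matrix ι ι ℝ) (M : Matrix ι (Fin m) ℝ) (ω : Set Torus) (T : ℝ)
    (f₀ : Torus → ι → ℝ) (u : ℝ → Torus → Fin m → ℝ) : Prop :=
  MemLp (fun p : ℝ × Torus => u p.1 p.2) 2 ((volume.restrict (Set.Ioo 0 T)).prod volume) ∧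
  (∀ᵐ p : ℝ × Torus ∂((volume.restrict (Set.Ioo 0 T)).prod volume),
      p.2 ∉ ω → u p.1 p.2 = 0) ∧
  ∀ n : ℤ,
    (NormedSpace.exp ((T : ℂ) • BnMat B A K n)).mulVec (fCoeffR f₀ n)
      + ∫ t in (0 : ℝ)..T,
          (NormedSpace.exp (((T - t : ℝ) : ℂ) • BnMat B A K n)).mulVec
            ((M.map Complex.ofReal).mulVec (fCoeffR (u t) n)) = 0

/-!
Setting `g = ∑ⱼ ∑_{ℓ<j} B̃^{j-1-ℓ} M̃ wⱼ^{(ℓ)}`, the telescoping identity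
`[B̃|M̃]ₖ w + g' = B̃ g + M̃ u` shows that `X - X̃ + g` solves `Z' = B̃ Z` with `Z(0) = 0`, hence
vanishes identically. The boundary conditions on `w` give `g(T) = 0`, so `X(T) = X̃(T)`.
-/

open Finset

theorem ContinuousLinearMap.iteratedDeriv_comp_left {𝕜 F G : Type*} [NontriviallyNormedField 𝕜]
    [NormedAddCommGroup F] [NormedSpace 𝕜 F] [NormedAddCommGroup G] [NormedSpace 𝕜 G]
    (L : F →L[𝕜] G) {f : 𝕜 → F} {n : WithTop ℕ∞} (hf : ContDiff 𝕜 n f) {i : ℕ} (hi : i ≤ n)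
    (x : 𝕜) : iteratedDeriv i (L ∘ f) x = L (iteratedDeriv i f x) := by
  simp only [iteratedDeriv_eq_iteratedFDeriv, L.iteratedFDeriv_comp_left hf.contDiffAt hi,
    ContinuousLinearMap.compContinuousMultilinearMap_coe, Function.comp_apply]

theorem ODE_solution_eq_zero_of_linear {E : Type*} [NormedAddCommGroup E] [NormedSpace ℝ E]
    (L : E →L[ℝ] E) {Z : ℝ → E} (hZ : ∀ t, HasDerivAt Z (L (Z t)) t) {t₀ : ℝ} (h₀ : Z t₀ = 0) :
    Z = 0 :=
  ODE_solution_unique_univ (v := fun _ => L) (s := fun _ => univ) (t₀ := t₀)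
    (fun _ => L.lipschitz.lipschitzOnWith) (fun t => ⟨hZ t, trivial⟩)
    (fun t => ⟨by simp, trivial⟩) h₀

theorem HasDerivAt.mulVec {ι κ : Type*} [Fintype ι] [Fintype κ] (A : Matrix ι κ ℂ)
    {f : ℝ → κ → ℂ} {f' : κ → ℂ} {t : ℝ} (hf : HasDerivAt f f' t) :
    HasDerivAt (fun s => A *ᵥ f s) (A *ᵥ f') t :=
  ((Matrix.mulVecLin A).restrictScalars ℝ).toContinuousLinearMap.hasFDerivAt.comp_hasDerivAt t hf

section Kalman

variable {ι κ : Type*} [Fintype ι] [DecidableEq ι] [Fintype κ]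

section Corrector

variable {R : Type*} [Semiring R] (B : Matrix ι ι R) (M : Matrix ι κ R)

def kalmanCorrector (n : ℕ) (a : ℕ → κ → R) : ι → R :=
  ∑ ℓ ∈ range n, (B ^ (n - 1 - ℓ) * M) *ᵥ a ℓ

theorem kalmanCorrector_succ (n : ℕ) (a : ℕ → κ → R) :
    kalmanCorrector B M (n + 1) a = B *ᵥ kalmanCorrector B M n a + M *ᵥ a n := by
  rw [kalmanCorrector, kalmanCorrector, sum_range_succ, mulVec_sum]
  congr 1
  · refine sum_congr rfl fun ℓ hℓ => ?_
    rw [mulVec_mulVec, ← Matrix.mul_assoc, ← pow_succ']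
    congr 3
    have := mem_range.1 hℓ
    omega
  · simp

theorem kalmanCorrector_succ' (n : ℕ) (a : ℕ → κ → R) :
    kalmanCorrector B M (n + 1) a
      = (B ^ n * M) *ᵥ a 0 + kalmanCorrector B M n (fun ℓ => a (ℓ + 1)) := by
  rw [kalmanCorrector, kalmanCorrector, sum_range_succ', add_comm]
  congr 1
  refine sum_congr rfl fun ℓ hℓ => ?_
  congr 3
  omega

theorem kalmanCorrector_eq_zero {n : ℕ} {a : ℕ → κ → R} (ha : ∀ ℓ < n, a ℓ = 0) :
    kalmanCorrector B M n a = 0 :=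
  sum_eq_zero fun ℓ hℓ => by rw [ha ℓ (mem_range.1 hℓ), mulVec_zero]

end Corrector

theorem kalman_mulVec {m k : ℕ} (B : Matrix ι ι ℂ) (M : Matrix ι (Fin m) ℂ)
    (v : Fin k × Fin m → ℂ) :
    kalman B M k *ᵥ v = ∑ j : Fin k, (B ^ (j : ℕ) * M) *ᵥ fun i => v (j, i) := by
  ext
  simp [mulVec, dotProduct, kalman, Fintype.sum_prod_type]

theorem kalman_mulVec_add_kalmanCorrector {m k : ℕ} (B : Matrix ι ι ℂ) (M : Matrix ι (Fin m) ℂ)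
    (a : Fin k → ℕ → Fin m → ℂ) :
    kalman B M k *ᵥ (fun p => a p.1 0 p.2)
        + ∑ j : Fin k, kalmanCorrector B M j (fun ℓ => a j (ℓ + 1))
      = B *ᵥ ∑ j : Fin k, kalmanCorrector B M j (a j) + M *ᵥ ∑ j : Fin k, a j j := by
  simp only [kalman_mulVec, mulVec_sum, ← sum_add_distrib, ← kalmanCorrector_succ,
    kalmanCorrector_succ']

theorem hasDerivAt_kalmanCorrector_iteratedDeriv (B : Matrix ι ι ℂ) (M : Matrix ι κ ℂ) {n : ℕ}
    {f : ℝ → κ → ℂ} (hf : ContDiff ℝ n f) (t : ℝ) :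
    HasDerivAt (fun s => kalmanCorrector B M n (fun ℓ => iteratedDeriv ℓ f s))
      (kalmanCorrector B M n (fun ℓ => iteratedDeriv (ℓ + 1) f t)) t := by
  refine HasDerivAt.fun_sum fun ℓ hℓ => HasDerivAt.mulVec _ ?_
  simp only [iteratedDeriv_succ]
  exact (hf.differentiable_iteratedDeriv ℓ (mod_cast mem_range.1 hℓ) t).hasDerivAt

end Kalman

theorem statement7_general
    (d m k : ℕ) (T : ℝ)
    (Bt : Matrix (Fin d) (Fin d) ℂ) (Mt : Matrix (Fin d) (Fin m) ℂ)
    (X₀ : Fin d → ℂ) (w : ℝ → Fin k × Fin m → ℂ)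
    (hw : ContDiff ℝ ((k - 1 : ℕ) : ℕ∞) w)
    (hwbd : ∀ j : ℕ, j + 2 ≤ k → iteratedDeriv j w 0 = 0 ∧ iteratedDeriv j w T = 0)
    (X Xt : ℝ → Fin d → ℂ)
    (hX : ∀ t : ℝ, HasDerivAt X (Bt.mulVec (X t) + (kalman Bt Mt k).mulVec (w t)) t)
    (hX0 : X 0 = X₀)
    (hXt : ∀ t : ℝ, HasDerivAt Xt (Bt.mulVec (Xt t) +
      Mt.mulVec (∑ j : Fin k, iteratedDeriv (j : ℕ) (fun s i => w s (j, i)) t)) t)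
    (hXt0 : Xt 0 = X₀) :
    X T = Xt T := by
  let block (j : Fin k) : (Fin k × Fin m → ℂ) →L[ℝ] (Fin m → ℂ) :=
    .pi fun i => .proj (j, i)
  have hblock (j : Fin k) {ℓ : ℕ} (hℓ : ℓ < k) (t : ℝ) :
      iteratedDeriv ℓ (fun s i => w s (j, i)) t = block j (iteratedDeriv ℓ w t) :=
    (block j).iteratedDeriv_comp_left hw (mod_cast Nat.le_sub_one_of_lt hℓ) t
  let g (t : ℝ) : Fin d → ℂ :=
    ∑ j : Fin k, kalmanCorrector Bt Mt j fun ℓ => iteratedDeriv ℓ (fun s i => w s (j, i)) t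
  have hg (t : ℝ) : HasDerivAt g (∑ j : Fin k, kalmanCorrector Bt Mt j
      fun ℓ => iteratedDeriv (ℓ + 1) (fun s i => w s (j, i)) t) t :=
    HasDerivAt.fun_sum fun j _ => hasDerivAt_kalmanCorrector_iteratedDeriv Bt Mt
      (((block j).contDiff.comp hw).of_le (mod_cast Nat.le_sub_one_of_lt j.2)) t
  have hg_eq_zero {t : ℝ} (ht : ∀ ℓ, ℓ + 2 ≤ k → iteratedDeriv ℓ w t = 0) : g t = 0 :=
    sum_eq_zero fun j _ => kalmanCorrector_eq_zero Bt Mt fun ℓ hℓ => by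
      rw [hblock j (by omega) t, ht ℓ (by omega), map_zero]
  have hZ (t : ℝ) : HasDerivAt (fun t => X t - Xt t + g t) (Bt *ᵥ (X t - Xt t + g t)) t := by
    refine (((hX t).sub (hXt t)).add (hg t)).congr_deriv ?_
    have := kalman_mulVec_add_kalmanCorrector Bt Mt
      fun j ℓ => iteratedDeriv ℓ (fun s i => w s (j, i)) t
    simp only [iteratedDeriv_zero] at this
    rw [mulVec_add, mulVec_sub]
    linear_combination this
  have hZ_zero := ODE_solution_eq_zero_of_linear
    ((mulVecLin Bt).restrictScalars ℝ).toContinuousLinearMap hZ (t₀ := 0)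
    (by simp [hX0, hXt0, hg_eq_zero fun ℓ hℓ => (hwbd ℓ hℓ).1])
  simpa [hg_eq_zero fun ℓ hℓ => (hwbd ℓ hℓ).2, sub_eq_zero] using congrFun hZ_zero T

/-- Algebraic solvability lemma: if `X' = B̃X + [B̃|M̃]_k w` and
`X̃' = B̃X̃ + M̃u` with `u = w₁ + w₂' + ⋯ + w_k^{(k-1)}`, the same initial condition,
and `w` of class `C^{k-1}` with derivatives up to order `k-2` vanishing at `0` and `T`,
then `X(T) = X̃(T)`. -/
theorem statement7
    (d m k : ℕ) (hk : 1 ≤ k) (T : ℝ) (hT : 0 < T)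
    (Bt : Matrix (Fin d) (Fin d) ℂ) (Mt : Matrix (Fin d) (Fin m) ℂ)
    (X₀ : Fin d → ℂ) (w : ℝ → Fin k × Fin m → ℂ)
    (hw : ContDiff ℝ ((k - 1 : ℕ) : ℕ∞) w)
    (hwbd : ∀ j : ℕ, j + 2 ≤ k → iteratedDeriv j w 0 = 0 ∧ iteratedDeriv j w T = 0)
    (X Xt : ℝ → Fin d → ℂ)
    (hX : ∀ t : ℝ, HasDerivAt X (Bt.mulVec (X t) + (kalman Bt Mt k).mulVec (w t)) t)
    (hX0 : X 0 = X₀)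
    (hXt : ∀ t : ℝ, HasDerivAt Xt (Bt.mulVec (Xt t) +
      Mt.mulVec (∑ j : Fin k, iteratedDeriv (j : ℕ) (fun s i => w s (j, i)) t)) t)
    (hXt0 : Xt 0 = X₀) :
    X T = Xt T :=
  statement7_general d m k T Bt Mt X₀ w hw hwbd X Xt hX hX0 hXt hXt0
end
end

section
/- Let B, A, K ∈ M_d(ℝ), M ∈ M_{d,m}(ℝ), B_n := −n²B − inA − K, and [B_n|M]_k := (M, B_nM, …, B_n^{k−1}M). Assume there exists N ∈ ℕ with rank [B_n|M]_d = d for all |n| ≥ N, and let k₀ be the eventual constant value of k(n) := min{k ≥ 1 : rank [B_n|M]_k = d}. For |n| large, K_n := [B_n|M]_{k₀} has rank d, so K_n·K_n^* ∈ M_d(ℂ) is invertible and the Moore–Penrose right pseudo-inverse K_n^+ := K_n^*·(K_n·K_n^*)^{−1} ∈ M_{k₀m,d}(ℂ) is well defined. Then there exist C > 0 and N' ∈ ℕ such that for all |n| ≥ N', every entry of K_n^+ has modulus at most C·(1+|n|)^{2(k₀−1)(2d−1)}. -/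
open MeasureTheory Real Set Matrix

noncomputable section

/-!
The entries of `K_n` are polynomials in `n` of degree at most `2(k₀ - 1)`, and since `n` is real
so are those of `K_n^*` (conjugate the coefficients). By Cramer's rule
`K_n⁺ = K_n^* adj(G_n) / det G_n` with `G_n = K_n K_n^*`: the numerator has entries of degree at
most `2(k₀ - 1) + (d - 1) · 4(k₀ - 1) = 2(k₀ - 1)(2d - 1)`, while `det G_n` is a polynomial in `n`
that does not vanish where `K_n` has rank `d`, hence is bounded away from `0` for `|n|` large.
-/

open Polynomial Filter

theorem Int.eventually_cofinite_iff_exists_le_abs {P : ℤ → Prop} :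
    (∀ᶠ n in cofinite, P n) ↔ ∃ N : ℕ, ∀ n : ℤ, (N : ℤ) ≤ |n| → P n := by
  rw [Int.cofinite_eq, eventually_sup, eventually_atBot, eventually_atTop]
  constructor
  · rintro ⟨⟨a, ha⟩, b, hb⟩
    refine ⟨a.natAbs + b.natAbs, fun n hn => ?_⟩
    rcases le_abs'.1 hn with h | h
    · exact ha n (by omega)
    · exact hb n (by omega)
  · rintro ⟨N, hN⟩
    exact ⟨⟨-N, fun n hn => hN n (le_abs'.2 (Or.inl hn))⟩,
      N, fun n hn => hN n (le_abs.2 (Or.inl hn))⟩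

theorem Int.tendsto_cast_cofinite_cobounded :
    Tendsto (fun n : ℤ => (n : ℝ)) cofinite (Bornology.cobounded ℝ) :=
  Metric.cobounded_eq_cocompact (α := ℝ) ▸ Int.tendsto_coe_cofinite

theorem Complex.tendsto_ofReal_cobounded :
    Tendsto ((↑) : ℝ → ℂ) (Bornology.cobounded ℝ) (Bornology.cobounded ℂ) :=
  Complex.isometry_ofReal.antilipschitz.tendsto_cobounded

namespace Polynomial

variable {𝕜 : Type*} [NormedField 𝕜]

theorem exists_pos_eventually_le_norm_eval {q : 𝕜[X]} (hq : q ≠ 0) :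
    ∃ c > 0, ∀ᶠ z in Bornology.cobounded 𝕜, c ≤ ‖q.eval z‖ := by
  rcases le_or_gt q.degree 0 with hdeg | hdeg
  · rw [eq_C_of_degree_le_zero hdeg] at hq ⊢
    exact ⟨‖q.coeff 0‖, by simpa using hq, by simp⟩
  · exact ⟨1, one_pos,
      (q.tendsto_norm_atTop hdeg tendsto_norm_cobounded_atTop).eventually_ge_atTop 1⟩

theorem norm_eval_le_of_natDegree_le {p : 𝕜[X]} {D : ℕ} (hp : p.natDegree ≤ D) (x : 𝕜) :
    ‖p.eval x‖ ≤ (∑ k ∈ Finset.range (D + 1), ‖p.coeff k‖) * (1 + ‖x‖) ^ D := by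
  rw [eval_eq_sum_range' (Nat.lt_succ_of_le hp), Finset.sum_mul]
  refine (norm_sum_le _ _).trans (Finset.sum_le_sum fun k hk => ?_)
  rw [norm_mul, norm_pow]
  have hx : 1 ≤ 1 + ‖x‖ := le_add_of_nonneg_right (norm_nonneg x)
  gcongr
  calc ‖x‖ ^ k ≤ (1 + ‖x‖) ^ k := by gcongr; linarith
    _ ≤ (1 + ‖x‖) ^ D := pow_le_pow_right₀ hx (Nat.lt_succ_iff.1 (Finset.mem_range.1 hk))

theorem exists_norm_eval_le_of_natDegree_le {α : Type*} [Finite α] (p : α → 𝕜[X]) {D : ℕ}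
    (hp : ∀ a, (p a).natDegree ≤ D) :
    ∃ C ≥ 0, ∀ a x, ‖(p a).eval x‖ ≤ C * (1 + ‖x‖) ^ D := by
  cases nonempty_fintype α
  let coeffSum a := ∑ k ∈ Finset.range (D + 1), ‖(p a).coeff k‖
  refine ⟨∑ a, coeffSum a, by positivity,
    fun a x => (norm_eval_le_of_natDegree_le (hp a) x).trans ?_⟩
  gcongr
  exact Finset.single_le_sum (f := coeffSum) (fun b _ => by positivity) (Finset.mem_univ a)

theorem eval_ofReal_map_conj (p : ℂ[X]) (x : ℝ) :
    (p.map (starRingEnd ℂ)).eval (x : ℂ) = starRingEnd ℂ (p.eval (x : ℂ)) := by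
  rw [eval_map]
  conv_lhs => rw [← Complex.conj_ofReal x]
  exact eval₂_at_apply _ _

end Polynomial

namespace Matrix

variable {R : Type*} {l m n : Type*}

theorem natDegree_mul_apply_le [Semiring R] [Fintype m] {P : Matrix l m R[X]}
    {Q : Matrix m n R[X]} {s t : ℕ} (hP : ∀ i j, (P i j).natDegree ≤ s)
    (hQ : ∀ i j, (Q i j).natDegree ≤ t) (i : l) (j : n) :
    ((P * Q) i j).natDegree ≤ s + t :=
  natDegree_sum_le_of_forall_le _ _ fun k _ =>
    natDegree_mul_le.trans (add_le_add (hP i k) (hQ k j))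

theorem natDegree_pow_apply_le [Semiring R] [Fintype n] [DecidableEq n] {P : Matrix n n R[X]}
    {s : ℕ} (hP : ∀ i j, (P i j).natDegree ≤ s) (k : ℕ) (i j : n) :
    ((P ^ k) i j).natDegree ≤ k * s := by
  induction k generalizing i j with
  | zero =>
    rw [pow_zero, one_apply]
    split_ifs <;> simp
  | succ k ih =>
    rw [pow_succ, Nat.succ_mul]
    exact natDegree_mul_apply_le ih hP i j

variable [CommRing R] [Fintype n] [DecidableEq n]

theorem natDegree_det_le_sum {A : Matrix n n R[X]} {t : n → ℕ}
    (hA : ∀ i j, (A i j).natDegree ≤ t i) : A.det.natDegree ≤ ∑ i, t i := by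
  rw [det_apply]
  refine natDegree_sum_le_of_forall_le _ _ fun σ _ => (natDegree_smul_le _ _).trans ?_
  calc (∏ i, A (σ i) i).natDegree ≤ ∑ i, (A (σ i) i).natDegree := natDegree_prod_le _ _
    _ ≤ ∑ i, t (σ i) := Finset.sum_le_sum fun i _ => hA _ _
    _ = ∑ i, t i := Equiv.sum_comp σ t

theorem natDegree_adjugate_apply_le {A : Matrix n n R[X]} {t : ℕ}
    (hA : ∀ i j, (A i j).natDegree ≤ t) (i j : n) :
    (A.adjugate i j).natDegree ≤ (Fintype.card n - 1) * t := by
  rw [adjugate_apply]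
  refine (natDegree_det_le_sum (t := Function.update (fun _ => t) j 0) fun k l => ?_).trans ?_
  · rcases eq_or_ne k j with rfl | hk
    · rw [updateRow_self, Function.update_self, Pi.single_apply]
      split_ifs <;> simp
    · rw [updateRow_ne hk, Function.update_of_ne hk]
      exact hA k l
  · rw [Finset.sum_update_of_mem (Finset.mem_univ j), Finset.sum_const, smul_eq_mul, zero_add,
      Finset.card_sdiff, Finset.card_univ]
    simp

theorem isUnit_of_rank_eq_card {K n : Type*} [Field K] [Fintype n] [DecidableEq n]
    {A : Matrix n n K} (hA : A.rank = Fintype.card n) : IsUnit A := by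
  refine mulVec_surjective_iff_isUnit.1 fun v => ?_
  have hrange : LinearMap.range A.mulVecLin = ⊤ :=
    Submodule.eq_top_of_finrank_eq (by rw [Module.finrank_fintype_fun_eq_card]; exact hA)
  obtain ⟨w, hw⟩ := LinearMap.range_eq_top.1 hrange v
  exact ⟨w, hw⟩

open ComplexOrder in
theorem isUnit_det_mul_conjTranspose_of_rank_eq {d : ℕ} {κ : Type*} [Fintype κ]
    {A : Matrix (Fin d) κ ℂ} (hA : A.rank = d) : IsUnit (A * Aᴴ).det :=
  (isUnit_iff_isUnit_det _).1 <| isUnit_of_rank_eq_card <| by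
    rw [rank_self_mul_conjTranspose, hA, Fintype.card_fin]

variable {ι κ : Type*}

/-- Conjugating the coefficients gives the conjugate transpose only at real arguments, see
`polyConjTranspose_map_evalRingHom_ofReal`. -/
def polyConjTranspose (P : Matrix ι κ ℂ[X]) : Matrix κ ι ℂ[X] :=
  Pᵀ.map (Polynomial.map (starRingEnd ℂ))

theorem polyConjTranspose_map_evalRingHom_ofReal (P : Matrix ι κ ℂ[X]) (x : ℝ) :
    (polyConjTranspose P).map (evalRingHom (x : ℂ)) = (P.map (evalRingHom (x : ℂ)))ᴴ := by
  ext i j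
  exact eval_ofReal_map_conj _ x

variable [Fintype ι] [DecidableEq ι]

theorem mul_inv_apply_eq_inv_det_mul {K : Type*} [Field K] (A : Matrix κ ι K)
    (G : Matrix ι ι K) (j : κ) (i : ι) :
    (A * G⁻¹) j i = G.det⁻¹ * (A * G.adjugate) j i := by
  rw [inv_def, Ring.inverse_eq_inv, Matrix.mul_smul, smul_apply, smul_eq_mul]

variable [Fintype κ]

def rightPseudoInv (A : Matrix ι κ ℂ) : Matrix κ ι ℂ :=
  Aᴴ * (A * Aᴴ)⁻¹

theorem exists_pos_eventually_norm_rightPseudoInv_apply_le (P : Matrix ι κ ℂ[X]) {D : ℕ}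
    (hP : ∀ i j, (P i j).natDegree ≤ D) {x₀ : ℝ}
    (hx₀ : IsUnit
      (P.map (evalRingHom (x₀ : ℂ)) * (P.map (evalRingHom (x₀ : ℂ)))ᴴ).det) :
    ∃ C > 0, ∀ᶠ x : ℝ in Bornology.cobounded ℝ, ∀ j i,
      ‖rightPseudoInv (P.map (evalRingHom (x : ℂ))) j i‖
        ≤ C * (1 + |x|) ^ (D * (2 * Fintype.card ι - 1)) := by
  set G := P * polyConjTranspose P
  set Num := polyConjTranspose P * G.adjugate
  have hG (x : ℝ) : G.map (evalRingHom (x : ℂ)) =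
      P.map (evalRingHom (x : ℂ)) * (P.map (evalRingHom (x : ℂ)))ᴴ := by
    rw [Matrix.map_mul, polyConjTranspose_map_evalRingHom_ofReal]
  have hdet (x : ℝ) : G.det.eval (x : ℂ) =
      (P.map (evalRingHom (x : ℂ)) * (P.map (evalRingHom (x : ℂ)))ᴴ).det := by
    rw [← hG, ← coe_evalRingHom, RingHom.map_det, RingHom.mapMatrix_apply]
  have hNum (x : ℝ) : Num.map (evalRingHom (x : ℂ)) = (P.map (evalRingHom (x : ℂ)))ᴴ *
      (P.map (evalRingHom (x : ℂ)) * (P.map (evalRingHom (x : ℂ)))ᴴ).adjugate := by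
    rw [Matrix.map_mul, polyConjTranspose_map_evalRingHom_ofReal, ← hG,
      ← RingHom.mapMatrix_apply, ← RingHom.mapMatrix_apply, RingHom.map_adjugate]
  have hPc_deg : ∀ j i, (polyConjTranspose P j i).natDegree ≤ D :=
    fun j i => natDegree_map_le.trans (hP i j)
  have hG_deg : ∀ i i', (G i i').natDegree ≤ D + D := natDegree_mul_apply_le hP hPc_deg
  have hNum_deg : ∀ j i, (Num j i).natDegree ≤ D * (2 * Fintype.card ι - 1) := by
    intro j i
    obtain ⟨e, he⟩ := Nat.exists_eq_add_one.2 (Fintype.card_pos_iff.2 ⟨i⟩)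
    have := natDegree_mul_apply_le hPc_deg (natDegree_adjugate_apply_le hG_deg) j i
    rw [he, Nat.add_sub_cancel] at this
    rw [he, show 2 * (e + 1) - 1 = 2 * e + 1 by omega]
    linarith
  have hq : G.det ≠ 0 := by
    intro h
    rw [← hdet, h, eval_zero] at hx₀
    exact not_isUnit_zero hx₀
  obtain ⟨c, hc, hlow⟩ := exists_pos_eventually_le_norm_eval hq
  obtain ⟨Cnum, hCnum, hup⟩ :=
    exists_norm_eval_le_of_natDegree_le (fun a : κ × ι => Num a.1 a.2) fun a => hNum_deg a.1 a.2
  refine ⟨Cnum / c + 1, by positivity,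
    (Complex.tendsto_ofReal_cobounded.eventually hlow).mono fun x hx j i => ?_⟩
  rw [rightPseudoInv, mul_inv_apply_eq_inv_det_mul, ← hNum, ← hdet, map_apply, coe_evalRingHom,
    norm_mul, norm_inv]
  have hNum_le := hup (j, i) x
  rw [Complex.norm_real, Real.norm_eq_abs] at hNum_le
  calc ‖G.det.eval (x : ℂ)‖⁻¹ * ‖(Num j i).eval (x : ℂ)‖
      ≤ c⁻¹ * (Cnum * (1 + |x|) ^ (D * (2 * Fintype.card ι - 1))) := by gcongr
    _ ≤ (Cnum / c + 1) * (1 + |x|) ^ (D * (2 * Fintype.card ι - 1)) := by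
      rw [← mul_assoc, inv_mul_eq_div]
      gcongr
      linarith

end Matrix

section Kalman

variable {ι : Type*} {m : ℕ}

def bnPoly (B A K : Matrix ι ι ℝ) : Matrix ι ι ℂ[X] :=
  of fun i j => C (-(B i j : ℂ)) * X ^ 2 + C (-(Complex.I * A i j)) * X + C (-(K i j : ℂ))

theorem natDegree_bnPoly_apply_le (B A K : Matrix ι ι ℝ) (i j : ι) :
    (bnPoly B A K i j).natDegree ≤ 2 := by
  rw [bnPoly, of_apply]
  compute_degree

variable [Fintype ι] [DecidableEq ι]

theorem bnPoly_map_evalRingHom (B A K : Matrix ι ι ℝ) (n : ℤ) :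
    (bnPoly B A K).map (evalRingHom (n : ℂ)) = BnMat B A K n := by
  ext i j
  simp only [map_apply, bnPoly, of_apply, BnMat, Matrix.sub_apply, Matrix.smul_apply,
    smul_eq_mul, coe_evalRingHom, eval_add, eval_mul, eval_C, eval_pow, eval_X]
  ring

def kalmanPoly (B A K : Matrix ι ι ℝ) (M : Matrix ι (Fin m) ℝ) (k : ℕ) :
    Matrix ι (Fin k × Fin m) ℂ[X] :=
  of fun i p => (bnPoly B A K ^ (p.1 : ℕ) * M.map fun x => C (x : ℂ)) i p.2

theorem natDegree_kalmanPoly_apply_le (B A K : Matrix ι ι ℝ) (M : Matrix ι (Fin m) ℝ)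
    (k : ℕ) (i : ι) (p : Fin k × Fin m) :
    (kalmanPoly B A K M k i p).natDegree ≤ 2 * (k - 1) := by
  have hM : ∀ i j, ((M.map fun x => C (x : ℂ)) i j).natDegree ≤ 0 := by simp
  have := natDegree_mul_apply_le
    (natDegree_pow_apply_le (natDegree_bnPoly_apply_le B A K) p.1) hM i p.2
  rw [kalmanPoly, of_apply]
  omega

theorem kalmanPoly_map_evalRingHom (B A K : Matrix ι ι ℝ) (M : Matrix ι (Fin m) ℝ) (k : ℕ)
    (n : ℤ) : (kalmanPoly B A K M k).map (evalRingHom (n : ℂ)) =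
      kalman (BnMat B A K n) (M.map Complex.ofReal) k := by
  ext i p
  have h : (bnPoly B A K ^ (p.1 : ℕ) * M.map fun x => C (x : ℂ)).map (evalRingHom (n : ℂ)) =
      BnMat B A K n ^ (p.1 : ℕ) * M.map Complex.ofReal := by
    rw [Matrix.map_mul, ← RingHom.mapMatrix_apply, map_pow, RingHom.mapMatrix_apply,
      bnPoly_map_evalRingHom, Matrix.map_map]
    congr
    ext
    simp
  exact congrFun (congrFun h i) p.2

end Kalman

theorem statement11_general
    (d m : ℕ) (B A K : Matrix (Fin d) (Fin d) ℝ) (M : Matrix (Fin d) (Fin m) ℝ)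
    (k₀ : ℕ) (N₀ : ℕ)
    -- `k₀` is the eventual constant value of `k(n) = min{k ≥ 1 : rank [B_n|M]_k = d}`:
    (hk₀spec : ∀ n : ℤ, (N₀ : ℤ) ≤ |n| →
      ((kalman (BnMat B A K n) (M.map Complex.ofReal) k₀).rank = d ∧
        ∀ k : ℕ, 1 ≤ k → k < k₀ →
          (kalman (BnMat B A K n) (M.map Complex.ofReal) k).rank ≠ d)) :
    ∃ C : ℝ, 0 < C ∧ ∃ N' : ℕ, ∀ n : ℤ, (N' : ℤ) ≤ |n| →
      (IsUnit (kalman (BnMat B A K n) (M.map Complex.ofReal) k₀ *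
        (kalman (BnMat B A K n) (M.map Complex.ofReal) k₀).conjTranspose).det ∧
      ∀ (i : Fin k₀ × Fin m) (j : Fin d),
        ‖(((kalman (BnMat B A K n) (M.map Complex.ofReal) k₀).conjTranspose *
            (kalman (BnMat B A K n) (M.map Complex.ofReal) k₀ *
              (kalman (BnMat B A K n) (M.map Complex.ofReal) k₀).conjTranspose)⁻¹) i j)‖
          ≤ C * (1 + |(n : ℝ)|) ^ (2 * (k₀ - 1) * (2 * d - 1))) := by
  have hunit (n : ℤ) (hn : (N₀ : ℤ) ≤ |n|) :=
    isUnit_det_mul_conjTranspose_of_rank_eq (hk₀spec n hn).1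
  have hmap (n : ℤ) : (kalmanPoly B A K M k₀).map (evalRingHom ((n : ℝ) : ℂ)) =
      kalman (BnMat B A K n) (M.map Complex.ofReal) k₀ := by
    rw [Complex.ofReal_intCast, kalmanPoly_map_evalRingHom]
  obtain ⟨C, hC, hbound⟩ := exists_pos_eventually_norm_rightPseudoInv_apply_le
    (kalmanPoly B A K M k₀) (natDegree_kalmanPoly_apply_le B A K M k₀)
    (x₀ := ((N₀ : ℤ) : ℝ)) (by rw [hmap]; exact hunit N₀ (le_abs_self _))
  obtain ⟨N', hN'⟩ := Int.eventually_cofinite_iff_exists_le_abs.1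
    ((Int.tendsto_cast_cofinite_cobounded.eventually hbound).and
      (Int.eventually_cofinite_iff_exists_le_abs.2 ⟨N₀, hunit⟩))
  refine ⟨C, hC, N', fun n hn => ?_⟩
  obtain ⟨hbd, hu⟩ := hN' n hn
  rw [hmap, Fintype.card_fin] at hbd
  exact ⟨hu, hbd⟩

/-- Polynomial bound on the entries of the right pseudo-inverse
`K_n⁺ = K_n^* (K_n K_n^*)⁻¹` of the `k₀`-block Kalman matrix `K_n = [B_n|M]_{k₀}`. -/
theorem statement11
    (d m : ℕ) (B A K : Matrix (Fin d) (Fin d) ℝ) (M : Matrix (Fin d) (Fin m) ℝ)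
    (N : ℕ)
    (hN : ∀ n : ℤ, (N : ℤ) ≤ |n| →
      (kalman (BnMat B A K n) (M.map Complex.ofReal) d).rank = d)
    (k₀ : ℕ) (hk₀ : 1 ≤ k₀) (N₀ : ℕ)
    -- `k₀` is the eventual constant value of `k(n) = min{k ≥ 1 : rank [B_n|M]_k = d}`:
    (hk₀spec : ∀ n : ℤ, (N₀ : ℤ) ≤ |n| →
      ((kalman (BnMat B A K n) (M.map Complex.ofReal) k₀).rank = d ∧
        ∀ k : ℕ, 1 ≤ k → k < k₀ →
          (kalman (BnMat B A K n) (M.map Complex.ofReal) k).rank ≠ d)) :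
    ∃ C : ℝ, 0 < C ∧ ∃ N' : ℕ, ∀ n : ℤ, (N' : ℤ) ≤ |n| →
      (IsUnit (kalman (BnMat B A K n) (M.map Complex.ofReal) k₀ *
        (kalman (BnMat B A K n) (M.map Complex.ofReal) k₀).conjTranspose).det ∧
      ∀ (i : Fin k₀ × Fin m) (j : Fin d),
        ‖(((kalman (BnMat B A K n) (M.map Complex.ofReal) k₀).conjTranspose *
            (kalman (BnMat B A K n) (M.map Complex.ofReal) k₀ *
              (kalman (BnMat B A K n) (M.map Complex.ofReal) k₀).conjTranspose)⁻¹) i j)‖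
          ≤ C * (1 + |(n : ℝ)|) ^ (2 * (k₀ - 1) * (2 * d - 1))) :=
  statement11_general d m B A K M k₀ N₀ hk₀spec
end
end

section
/- Let d ≥ 1, 1 ≤ m ≤ d, B, A, K ∈ M_d(ℝ), M ∈ M_{d,m}(ℝ), B_n := −n²B − inA − K ∈ M_d(ℂ), and [B_n|M] := (M, B_nM, …, B_n^{d−1}M). Let ω ⊆ 𝕋 be a nonempty open set, ε > 0 and n₀ ∈ ℕ. For each n with |n| ≤ n₀ let X_n ∈ ℂ^d belong to the column span of [B_n|M] over ℂ. If Mᵀ·(Σ_{|n|≤n₀} exp(t·B_n^*)·X_n·e^{inx}) = 0 for every t ∈ (0,ε) and every x ∈ ω, then X_n = 0 for all |n| ≤ n₀. -/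
/-!
Fix a frequency `n`. Since the characters `e^{ikx}` restrict to distinct powers of the
injective map `x ↦ e^{ix}`, a trigonometric polynomial vanishing on the infinite set `ω` is
a Laurent polynomial with infinitely many roots, so each coefficient `Mᵀ e^{tB_n^*} X_n`
vanishes for `t ∈ (0, ε)`. Differentiating repeatedly in `t` and letting `t → 0` gives
`Mᵀ (B_n^*)^k X_n = 0` for all `k`, i.e. `X_n` is orthogonal to the range of the Kalman
matrix `[B_n|M]`; as `X_n` also lies in that range, `X_n = 0`.
-/

open MeasureTheory Real Set Matrix

noncomputable section

open Topology

open Polynomial in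
theorem eq_zero_of_forall_sum_mul_zpow_eq_zero {K : Type*} [Field K] {Z : Set K}
    (hZ : Z.Infinite) {N : ℕ} {c : ℤ → K}
    (h : ∀ z ∈ Z, ∑ n ∈ Finset.Icc (-N : ℤ) N, c n * z ^ n = 0) :
    ∀ n ∈ Finset.Icc (-N : ℤ) N, c n = 0 := by
  set p : K[X] := ∑ n ∈ Finset.Icc (-N : ℤ) N, C (c n) * X ^ (n + N).toNat
  have hpow {n : ℤ} (hn : n ∈ Finset.Icc (-N : ℤ) N) (z : K) (hz : z ≠ 0) :
      z ^ (n + N).toNat = z ^ n * z ^ N := by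
    rw [← zpow_natCast, Int.toNat_of_nonneg (by grind), zpow_add₀ hz, zpow_natCast]
  have hroot : Z \ {0} ⊆ {z | p.IsRoot z} := by
    rintro z ⟨hz, hz0⟩
    simp only [mem_ofPred_eq, IsRoot, p, eval_finsetSum, eval_mul, eval_C, eval_pow, eval_X]
    rw [Finset.sum_congr rfl fun n hn => by rw [hpow hn z hz0, ← mul_assoc], ← Finset.sum_mul,
      h z hz, zero_mul]
  have hp : p = 0 := eq_zero_of_infinite_isRoot p ((hZ.sdiff (finite_singleton 0)).mono hroot)
  intro n hn
  have hcoeff := congrArg (coeff · (n + N).toNat) hp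
  simp only [p, finsetSum_coeff, coeff_C_mul_X_pow, coeff_zero] at hcoeff
  rwa [Finset.sum_eq_single_of_mem n hn fun m hm hmn => if_neg (by grind), if_pos rfl] at hcoeff

instance {T : ℝ} [Fact (0 < T)] : Nontrivial (AddCircle T) := by
  refine ⟨⟨((T / 2 : ℝ) : AddCircle T), 0, ?_⟩⟩
  rw [Ne, AddCircle.coe_eq_zero_iff]
  rintro ⟨n, hn⟩
  have hT : 0 < T := Fact.out
  have h2n : ((2 * n : ℤ) : ℝ) = 1 := by
    rw [zsmul_eq_mul] at hn
    push_cast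
    nlinarith
  have : 2 * n = 1 := by exact_mod_cast h2n
  omega

theorem eq_zero_of_forall_sum_fourier_smul_eq_zero {T : ℝ} [Fact (0 < T)] {ι : Type*}
    {ω : Set (AddCircle T)} (hω : IsOpen ω) (hωne : ω.Nonempty) {N : ℕ} {c : ℤ → ι → ℂ}
    (h : ∀ x ∈ ω, ∑ n ∈ Finset.Icc (-N : ℤ) N, fourier n x • c n = 0) :
    ∀ n ∈ Finset.Icc (-N : ℤ) N, c n = 0 := by
  obtain ⟨x₀, hx₀⟩ := hωne
  have hZ : ((fun x => (AddCircle.toCircle x : ℂ)) '' ω).Infinite :=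
    (infinite_of_mem_nhds x₀ (hω.mem_nhds hx₀)).image
      (Circle.coe_injective.comp (AddCircle.injective_toCircle (Fact.out : 0 < T).ne')).injOn
  intro n hn
  ext i
  refine eq_zero_of_forall_sum_mul_zpow_eq_zero hZ (c := (c · i)) ?_ n hn
  rintro _ ⟨x, hx, rfl⟩
  simpa [fourier_apply, AddCircle.toCircle_zsmul, mul_comm] using congrFun (h x hx) i

theorem map_pow_eq_zero_of_map_exp_smul_eq_zero {𝕂 𝔸 F : Type*} [RCLike 𝕂] [NormedRing 𝔸]
    [NormedAlgebra 𝕂 𝔸] [CompleteSpace 𝔸] [NormedAddCommGroup F] [NormedSpace 𝕂 F]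
    (L : 𝔸 →L[𝕂] F) (a : 𝔸) {s : Set 𝕂} (hs : IsOpen s) (hs0 : 0 ∈ closure s)
    (h : ∀ t ∈ s, L (NormedSpace.exp (t • a)) = 0) (k : ℕ) : L (a ^ k) = 0 := by
  have hderiv (j : ℕ) (t : 𝕂) : HasDerivAt (fun u => L (NormedSpace.exp (u • a) * a ^ j))
      (L (NormedSpace.exp (t • a) * a ^ (j + 1))) t := by
    simpa only [Function.comp_def, mul_assoc, ← pow_succ'] using
      L.hasFDerivAt.comp_hasDerivAt t ((hasDerivAt_exp_smul_const a t).mul_const (a ^ j))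
  have hvanish (j : ℕ) : ∀ t ∈ s, L (NormedSpace.exp (t • a) * a ^ j) = 0 := by
    induction j with
    | zero => simpa using h
    | succ j ih =>
      intro t ht
      have hloc : (fun u => L (NormedSpace.exp (u • a) * a ^ j)) =ᶠ[𝓝 t] fun _ => 0 :=
        Filter.eventually_of_mem (hs.mem_nhds ht) ih
      exact (hderiv j t).unique ((hasDerivAt_const t (0 : F)).congr_of_eventuallyEq hloc)
  have hclosed : IsClosed {t : 𝕂 | L (NormedSpace.exp (t • a) * a ^ k) = 0} :=
    isClosed_eq (continuous_iff_continuousAt.2 fun t => (hderiv k t).continuousAt) continuous_const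
  have h0 : (0 : 𝕂) ∈ {t : 𝕂 | L (NormedSpace.exp (t • a) * a ^ k) = 0} :=
    closure_minimal (hvanish k) hclosed hs0
  simpa using h0

theorem Matrix.eq_zero_of_mulVec_eq_of_conjTranspose_mulVec_eq_zero {ι κ R : Type*} [Fintype ι]
    [Fintype κ] [CommRing R] [StarRing R] [PartialOrder R] [StarOrderedRing R] [NoZeroDivisors R]
    {C : Matrix ι κ R} {x : ι → R} {y : κ → R} (hy : C *ᵥ y = x) (hx : Cᴴ *ᵥ x = 0) : x = 0 := by
  rw [← dotProduct_star_self_eq_zero]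
  calc star x ⬝ᵥ x = star x ⬝ᵥ C *ᵥ y := by rw [hy]
    _ = star (Cᴴ *ᵥ x) ⬝ᵥ y := by rw [dotProduct_mulVec, star_mulVec, conjTranspose_conjTranspose]
    _ = 0 := by rw [hx, star_zero, zero_dotProduct]

theorem kalman_conjTranspose_mulVec_eq_zero {ι : Type*} [Fintype ι] [DecidableEq ι] {m k : ℕ}
    {B : Matrix ι ι ℂ} {M : Matrix ι (Fin m) ℂ} {x : ι → ℂ}
    (h : ∀ j < k, Mᴴ *ᵥ (Bᴴ ^ j *ᵥ x) = 0) : (kalman B M k)ᴴ *ᵥ x = 0 := by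
  ext ⟨j, i⟩
  have hji := congrFun (h j j.2) i
  rwa [mulVec_mulVec, ← conjTranspose_pow, ← conjTranspose_mul] at hji

attribute [local instance] Matrix.linftyOpNormedAddCommGroup Matrix.linftyOpNormedRing
  Matrix.linftyOpNormedAlgebra

theorem statement14_general
    (d m : ℕ)
    (B A K : Matrix (Fin d) (Fin d) ℝ) (M : Matrix (Fin d) (Fin m) ℝ)
    (ω : Set Torus) (hω : IsOpen ω) (hωne : ω.Nonempty)
    (ε : ℝ) (hε : 0 < ε) (n₀ : ℕ)
    (X : ℤ → Fin d → ℂ)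
    (hX : ∀ n : ℤ, |n| ≤ (n₀ : ℤ) →
      ∃ y : Fin d × Fin m → ℂ,
        (kalman (BnMat B A K n) (M.map Complex.ofReal) d).mulVec y = X n)
    (hobs : ∀ t ∈ Set.Ioo (0 : ℝ) ε, ∀ x ∈ ω,
      (M.map Complex.ofReal).transpose.mulVec
        (∑ n ∈ Finset.Icc (-(n₀ : ℤ)) (n₀ : ℤ),
          fourier n x •
            (NormedSpace.exp ((t : ℂ) • (BnMat B A K n).conjTranspose)).mulVec (X n)) = 0) :
    ∀ n : ℤ, |n| ≤ (n₀ : ℤ) → X n = 0 := by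
  intro n hn
  set Mc := M.map Complex.ofReal
  have hMc : Mcᴴ = Mcᵀ := by ext; simp [Mc]
  have hfreq (t : ℝ) (ht : t ∈ Ioo 0 ε) :
      Mcᵀ *ᵥ (NormedSpace.exp ((t : ℂ) • (BnMat B A K n)ᴴ) *ᵥ X n) = 0 :=
    eq_zero_of_forall_sum_fourier_smul_eq_zero hω hωne
      (c := fun q => Mcᵀ *ᵥ (NormedSpace.exp ((t : ℂ) • (BnMat B A K q)ᴴ) *ᵥ X q))
      (fun x hx => by simpa [mulVec_sum, mulVec_smul] using hobs t ht x hx) n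
      (Finset.mem_Icc.2 (abs_le.1 hn))
  let L : Matrix (Fin d) (Fin d) ℂ →L[ℝ] Fin m → ℂ :=
    ((Mcᵀ.mulVecLin ∘ₗ LinearMap.applyₗ (X n) ∘ₗ Matrix.toLin'.toLinearMap).restrictScalars
      ℝ).toContinuousLinearMap
  have h0 : (0 : ℝ) ∈ closure (Ioo 0 ε) := by simp [closure_Ioo hε.ne, hε.le]
  have hpow (k : ℕ) : Mcᴴ *ᵥ ((BnMat B A K n)ᴴ ^ k *ᵥ X n) = 0 := by
    rw [hMc]
    exact map_pow_eq_zero_of_map_exp_smul_eq_zero L _ isOpen_Ioo h0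
      (fun t ht => by rw [← Complex.coe_smul]; exact hfreq t ht) k
  obtain ⟨y, hy⟩ := hX n hn
  open scoped ComplexOrder in
  exact eq_zero_of_mulVec_eq_of_conjTranspose_mulVec_eq_zero hy
    (kalman_conjTranspose_mulVec_eq_zero fun j _ => hpow j)

/-- Unique continuation for low frequencies of the adjoint system: if the
observation `Mᵀ(Σ_{|n|≤n₀} e^{tB_n^*} X_n e^{inx})` vanishes on `(0,ε) × ω` and each `X_n`
lies in the column span of the Kalman matrix `[B_n|M]`, then all `X_n` vanish. -/
theorem statement14
    (d m : ℕ) (hd : 1 ≤ d) (hm : 1 ≤ m) (hmd : m ≤ d)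
    (B A K : Matrix (Fin d) (Fin d) ℝ) (M : Matrix (Fin d) (Fin m) ℝ)
    (ω : Set Torus) (hω : IsOpen ω) (hωne : ω.Nonempty)
    (ε : ℝ) (hε : 0 < ε) (n₀ : ℕ)
    (X : ℤ → Fin d → ℂ)
    (hX : ∀ n : ℤ, |n| ≤ (n₀ : ℤ) →
      ∃ y : Fin d × Fin m → ℂ,
        (kalman (BnMat B A K n) (M.map Complex.ofReal) d).mulVec y = X n)
    (hobs : ∀ t ∈ Set.Ioo (0 : ℝ) ε, ∀ x ∈ ω,
      (M.map Complex.ofReal).transpose.mulVec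
        (∑ n ∈ Finset.Icc (-(n₀ : ℤ)) (n₀ : ℤ),
          fourier n x •
            (NormedSpace.exp ((t : ℂ) • (BnMat B A K n).conjTranspose)).mulVec (X n)) = 0) :
    ∀ n : ℤ, |n| ≤ (n₀ : ℤ) → X n = 0 :=
  statement14_general d m B A K M ω hω hωne ε hε n₀ X hX hobs
end
end
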